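/- Let A be a flat layout and N a positive integer. If A is N-complementable, then comp(A,N) is an N-complement of A: A ⊥ comp(A,N) and size(A)·size(comp(A,N)) = N. -/

import Mathlib

/-- A flat layout, represented as its list of modes `(sᵢ, dᵢ)`:
the first component of each mode is a shape entry, the second a stride entry. -/
abbrev FlatLayout := List (ℕ × ℕ)

namespace FlatLayout

/-- Validity of a flat layout: every shape entry is a positive integer. -/
def Valid (L : FlatLayout) : Prop := ∀ p ∈ L, 0 < p.1

/-- The size of a flat layout: the product of its shape entries. -/
def size (L : FlatLayout) : ℕ := (L.map Prod.fst).prod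

/-- The cosize of a flat layout: `1 + Σ (sᵢ - 1) * dᵢ`. -/
def cosize (L : FlatLayout) : ℕ := 1 + (L.map fun p => (p.1 - 1) * p.2).sum

/-- The rank of a flat layout: its number of modes. -/
def rank (L : FlatLayout) : ℕ := L.length

/-- The layout function `Φ_L`: `Φ_L(x) = Σ xᵢ·dᵢ` where
`xᵢ = ⌊x / (s₁⋯sᵢ₋₁)⌋ mod sᵢ`. -/
def phi : FlatLayout → ℕ → ℕ
  | [], _ => 0
  | (s, d) :: rest, x => x % s * d + phi rest (x / s)

/-- `squeeze L` deletes every mode whose shape entry equals `1`. -/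
def squeeze (L : FlatLayout) : FlatLayout := L.filter fun p => p.1 != 1

/-- `filterZeros L` deletes every mode whose stride entry equals `0`. -/
def filterZeros (L : FlatLayout) : FlatLayout := L.filter fun p => p.2 != 0

/-- The ordering on modes: `(s,d) ⪯ (s',d')` iff `d < d'`, or `d = d'` and `s ≤ s'`. -/
def ModeLE (p q : ℕ × ℕ) : Prop := p.2 < q.2 ∨ (p.2 = q.2 ∧ p.1 ≤ q.1)

instance : DecidableRel ModeLE := fun p q => by unfold ModeLE; infer_instance

/-- A flat layout is sorted if its consecutive modes are `⪯`-increasing. -/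
def Sorted (L : FlatLayout) : Prop := L.Chain' ModeLE

/-- `sortL L` stably sorts the modes of `L` with respect to `⪯`. -/
def sortL (L : FlatLayout) : FlatLayout := L.mergeSort fun p q => decide (ModeLE p q)

/-- A flat layout is coalesced if no shape entry equals `1` and
for consecutive modes, `sᵢ·dᵢ ≠ dᵢ₊₁`. -/
def Coalesced (L : FlatLayout) : Prop :=
  (∀ p ∈ L, p.1 ≠ 1) ∧ L.Chain' fun p q => p.1 * p.2 ≠ q.2

/-- Combine adjacent modes `(s,d), (s',d')` with `d' = s·d` into `(s·s', d)`, repeatedly. -/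
def coalAux : List (ℕ × ℕ) → List (ℕ × ℕ)
  | [] => []
  | p :: rest =>
    match coalAux rest with
    | [] => [p]
    | q :: rest' =>
        if p.1 * p.2 = q.2 then (p.1 * q.1, p.2) :: rest' else p :: q :: rest'

/-- Coalesce of a flat layout: squeeze, then repeatedly combine adjacent modes
`(s,d), (s',d')` with `d' = s·d` into `(s·s', d)`. -/
def coal (L : FlatLayout) : FlatLayout := coalAux (squeeze L)

/-- Compactness: the layout function takes values in `{0, …, cosize L - 1}` and induces a
bijection `{0, …, size L - 1} → {0, …, cosize L - 1}`. -/
def Compact (L : FlatLayout) : Prop :=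
  Set.BijOn (phi L) {x | x < size L} {y | y < cosize L}

/-- `B` is a complement of `A` (written `A ⊥ B`) if the concatenation `A ⋆ B` is compact. -/
def Perp (A B : FlatLayout) : Prop := Compact (A ++ B)

/-- `A` is complementable if, writing `sort(squeeze A) = (s₁,…,sₘ):(d₁,…,dₘ)`,
`sᵢ·dᵢ` divides `dᵢ₊₁` for all `1 ≤ i < m`. -/
def Complementable (A : FlatLayout) : Prop :=
  (sortL (squeeze A)).Chain' fun p q => p.1 * p.2 ∣ q.2

/-- `B` is an `N`-complement of `A` if `B` is a complement of `A`
and `size A * size B = N`. -/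
def IsNComplement (A B : FlatLayout) (N : ℕ) : Prop :=
  Perp A B ∧ size A * size B = N

/-- `A` is `N`-complementable if, writing `sort(squeeze A) = (s₁,…,sₘ):(d₁,…,dₘ)`,
`sᵢ·dᵢ ∣ dᵢ₊₁` for all `1 ≤ i < m`, and `sₘ·dₘ ∣ N`. -/
def NComplementable (A : FlatLayout) (N : ℕ) : Prop :=
  ((sortL (squeeze A)).Chain' fun p q => p.1 * p.2 ∣ q.2) ∧
  ∀ p, (sortL (squeeze A)).getLast? = some p → p.1 * p.2 ∣ N

/-- Given `l = [(s₁,d₁),…,(sₘ,dₘ)]`, the layout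
`C = (d₁, d₂/(s₁d₁), …, dₘ/(sₘ₋₁dₘ₋₁)) : (1, s₁d₁, …, sₘ₋₁dₘ₋₁)`. -/
def compModes (l : List (ℕ × ℕ)) : List (ℕ × ℕ) :=
  match l with
  | [] => []
  | (_, d₁) :: t =>
      (d₁, 1) :: (l.zip t).map fun pq => (pq.2.2 / (pq.1.1 * pq.1.2), pq.1.1 * pq.1.2)

/-- The complement `comp A = coal C` of a complementable flat layout `A`. -/
def comp (A : FlatLayout) : FlatLayout := coal (compModes (sortL (squeeze A)))

/-- Given `l = [(s₁,d₁),…,(sₘ,dₘ)]` and `N`, the layout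
`C = (d₁, d₂/(s₁d₁), …, dₘ/(sₘ₋₁dₘ₋₁), N/(sₘdₘ)) : (1, s₁d₁, …, sₘ₋₁dₘ₋₁, sₘdₘ)`. -/
def compNModes (l : List (ℕ × ℕ)) (N : ℕ) : List (ℕ × ℕ) :=
  match l.getLast? with
  | none => [(N, 1)]
  | some (sm, dm) => compModes l ++ [(N / (sm * dm), sm * dm)]

/-- The `N`-complement `comp(A, N) = coal C` of an `N`-complementable flat layout `A`. -/
def compN (A : FlatLayout) (N : ℕ) : FlatLayout :=
  coal (compNModes (sortL (squeeze A)) N)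

/-- `L` is tractable if, writing `sort L = (s₁,…,sₘ):(d₁,…,dₘ)`, for every `1 ≤ i < m`
either `dᵢ = 0` or `sᵢ·dᵢ` divides `dᵢ₊₁`. -/
def Tractable (L : FlatLayout) : Prop :=
  (sortL L).Chain' fun p q => p.2 = 0 ∨ p.1 * p.2 ∣ q.2

end FlatLayout

/-!
Let `M = sort(squeeze A) = (s₁,…,sₘ):(d₁,…,dₘ)`. Interleaving the modes of `M` with those of
the layout `C` defining `comp(A,N)` gives
`(d₁,1), (s₁,d₁), (d₂/(s₁d₁), s₁d₁), (s₂,d₂), …, (N/(sₘdₘ), sₘdₘ)`,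
which by the divisibility conditions is the column-major layout of size `N`: its layout function
is the identity on `{0,…,N-1}`, so it is compact. Compactness only depends on the size, the
cosize and the image of the layout function, and these are preserved by squeezing, coalescing
and permuting modes; hence `A ⋆ comp(A,N)` is compact too.
-/

open Finset Pointwise

namespace FlatLayout

@[simp] lemma size_nil : size ([] : FlatLayout) = 1 := rfl

@[simp] lemma size_cons (p : ℕ × ℕ) (L : FlatLayout) : size (p :: L) = p.1 * size L := by
  simp [size]

@[simp] lemma size_append (X Y : FlatLayout) : size (X ++ Y) = size X * size Y := by
  simp [size]

lemma size_pos_iff {L : FlatLayout} : 0 < size L ↔ L.Valid := by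
  induction L with
  | nil => simp [Valid]
  | cons p L ih => simp [Valid, CanonicallyOrderedAdd.mul_pos, ih]

lemma cosize_cons (p : ℕ × ℕ) (L : FlatLayout) :
    cosize (p :: L) = (p.1 - 1) * p.2 + cosize L := by
  simp only [cosize, List.map_cons, List.sum_cons]
  ring

lemma cosize_append (X Y : FlatLayout) : cosize (X ++ Y) + 1 = cosize X + cosize Y := by
  simp only [cosize, List.map_append, List.sum_append]
  ring

lemma phi_append (X Y : FlatLayout) (x : ℕ) :
    phi (X ++ Y) x = phi X (x % size X) + phi Y (x / size X) := by
  induction X generalizing x with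
  | nil => simp [phi]
  | cons p X ih =>
    obtain ⟨s, d⟩ := p
    simp only [List.cons_append, phi, ih, size_cons, Nat.mod_mul_right_mod,
      Nat.mod_mul_right_div_self, Nat.div_div_eq_div_mul]
    ring

def values (L : FlatLayout) : Finset ℕ := (range (size L)).image (phi L)

lemma values_append (X Y : FlatLayout) : values (X ++ Y) = values X + values Y := by
  ext y
  simp only [values, mem_add, mem_image, mem_range, size_append]
  constructor
  · rintro ⟨x, hx, rfl⟩
    have hX : 0 < size X := Nat.pos_of_mul_pos_right (Nat.zero_lt_of_lt hx)
    exact ⟨_, ⟨x % size X, Nat.mod_lt x hX, rfl⟩, _,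
      ⟨x / size X, Nat.div_lt_of_lt_mul hx, rfl⟩, (phi_append X Y x).symm⟩
  · rintro ⟨_, ⟨a, ha, rfl⟩, _, ⟨b, hb, rfl⟩, rfl⟩
    have hX : 0 < size X := Nat.zero_lt_of_lt ha
    refine ⟨a + size X * b, ?_, ?_⟩
    · calc a + size X * b < size X * (b + 1) := by rw [Nat.mul_succ]; omega
        _ ≤ size X * size Y := Nat.mul_le_mul_left _ hb
    · rw [phi_append, Nat.add_mul_mod_self_left, Nat.mod_eq_of_lt ha,
        Nat.add_mul_div_left _ _ hX, Nat.div_eq_of_lt ha, zero_add]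

lemma values_singleton_one (d : ℕ) : values [(1, d)] = {0} := by
  simp [values, phi]

lemma compact_iff_values (L : FlatLayout) :
    Compact L ↔ values L = range (cosize L) ∧ (values L).card = size L := by
  have hrange (n : ℕ) : {x | x < n} = (range n : Set ℕ) := by ext; simp
  have hbij {s : Set ℕ} {t : Set ℕ} :
      Set.BijOn (phi L) s t ↔ phi L '' s = t ∧ Set.InjOn (phi L) s :=
    ⟨fun h => ⟨h.image_eq, h.injOn⟩, fun ⟨he, hi⟩ => he ▸ hi.bijOn_image⟩
  rw [Compact, hrange, hrange, hbij, values, ← coe_image, coe_inj, ← card_image_iff, card_range]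

structure ImageEquiv (X Y : FlatLayout) : Prop where
  size_eq : size X = size Y
  cosize_eq : cosize X = cosize Y
  values_eq : values X = values Y

namespace ImageEquiv

@[refl] lemma refl (X : FlatLayout) : ImageEquiv X X := ⟨rfl, rfl, rfl⟩

lemma symm {X Y : FlatLayout} (h : ImageEquiv X Y) : ImageEquiv Y X :=
  ⟨h.size_eq.symm, h.cosize_eq.symm, h.values_eq.symm⟩

lemma trans {X Y Z : FlatLayout} (h₁ : ImageEquiv X Y) (h₂ : ImageEquiv Y Z) :
    ImageEquiv X Z :=
  ⟨h₁.size_eq.trans h₂.size_eq, h₁.cosize_eq.trans h₂.cosize_eq,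
    h₁.values_eq.trans h₂.values_eq⟩

lemma append {X X' Y Y' : FlatLayout} (hX : ImageEquiv X X') (hY : ImageEquiv Y Y') :
    ImageEquiv (X ++ Y) (X' ++ Y') where
  size_eq := by rw [size_append, size_append, hX.size_eq, hY.size_eq]
  cosize_eq := by
    have h₁ := cosize_append X Y
    have h₂ := cosize_append X' Y'
    rw [hX.cosize_eq, hY.cosize_eq] at h₁
    omega
  values_eq := by rw [values_append, values_append, hX.values_eq, hY.values_eq]

lemma cons {X Y : FlatLayout} (p : ℕ × ℕ) (h : ImageEquiv X Y) : ImageEquiv (p :: X) (p :: Y) :=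
  (refl [p]).append h

lemma compact_iff {X Y : FlatLayout} (h : ImageEquiv X Y) : Compact X ↔ Compact Y := by
  rw [compact_iff_values, compact_iff_values, h.size_eq, h.cosize_eq, h.values_eq]

end ImageEquiv

lemma imageEquiv_append_comm (X Y : FlatLayout) : ImageEquiv (X ++ Y) (Y ++ X) where
  size_eq := by rw [size_append, size_append, Nat.mul_comm]
  cosize_eq := by
    have h₁ := cosize_append X Y
    have h₂ := cosize_append Y X
    omega
  values_eq := by rw [values_append, values_append, add_comm]

lemma imageEquiv_of_perm {X Y : FlatLayout} (h : X.Perm Y) : ImageEquiv X Y := by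
  induction h with
  | nil => rfl
  | cons p _ ih => exact ih.cons p
  | swap p q L => exact (imageEquiv_append_comm [q] [p]).append (.refl L)
  | trans _ _ ih₁ ih₂ => exact ih₁.trans ih₂

lemma imageEquiv_unit_cons (d : ℕ) (L : FlatLayout) : ImageEquiv ((1, d) :: L) L where
  size_eq := by simp
  cosize_eq := by simp [cosize_cons]
  values_eq := by
    rw [← List.singleton_append, values_append, values_singleton_one, singleton_add]
    simp

lemma imageEquiv_squeeze (L : FlatLayout) : ImageEquiv (squeeze L) L := by
  induction L with
  | nil => rfl
  | cons p L ih =>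
    by_cases hp : p.1 = 1
    · obtain ⟨s, d⟩ := p
      obtain rfl : s = 1 := hp
      rw [squeeze, List.filter_cons_of_neg (by simp)]
      exact ih.trans (imageEquiv_unit_cons d L).symm
    · rw [squeeze, List.filter_cons_of_pos (by simpa using hp)]
      exact ih.cons p

lemma phi_coalesce (s d s' : ℕ) (L : FlatLayout) (x : ℕ) :
    phi ((s, d) :: (s', s * d) :: L) x = phi ((s * s', d) :: L) x := by
  simp only [phi, Nat.mod_mul, Nat.div_div_eq_div_mul]
  ring

lemma imageEquiv_coalesce {s s' : ℕ} (hs : 0 < s) (hs' : 0 < s') (d : ℕ) (L : FlatLayout) :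
    ImageEquiv ((s, d) :: (s', s * d) :: L) ((s * s', d) :: L) where
  size_eq := by simp only [size_cons]; ring
  cosize_eq := by
    obtain ⟨a, rfl⟩ : ∃ a, s = a + 1 := ⟨s - 1, by omega⟩
    obtain ⟨b, rfl⟩ : ∃ b, s' = b + 1 := ⟨s' - 1, by omega⟩
    simp only [cosize_cons, Nat.add_sub_cancel]
    rw [show (a + 1) * (b + 1) = (a + b + a * b) + 1 by ring, Nat.add_sub_cancel]
    ring
  values_eq := by simp only [values, size_cons, funext (phi_coalesce s d s' L), Nat.mul_assoc]

lemma imageEquiv_coalAux {L : FlatLayout} (hL : L.Valid) : ImageEquiv (coalAux L) L := by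
  induction L with
  | nil => rfl
  | cons p L ih =>
    have ih := ih fun q hq => hL q (List.mem_cons_of_mem p hq)
    rcases hL' : coalAux L with _ | ⟨q, L'⟩
    · rw [coalAux, hL']
      exact (hL' ▸ ih).cons p
    · rw [coalAux, hL']
      rw [hL'] at ih
      dsimp only
      split_ifs with hpq
      · obtain ⟨s, d⟩ := p
        obtain ⟨s', d'⟩ := q
        obtain rfl : s * d = d' := hpq
        have hq : 0 < s' := by
          have := size_pos_iff.mpr (fun q hq => hL q (List.mem_cons_of_mem _ hq))
          rw [← ih.size_eq, size_cons] at this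
          exact Nat.pos_of_mul_pos_right this
        exact (imageEquiv_coalesce (hL _ List.mem_cons_self) hq d L').symm.trans (ih.cons _)
      · exact ih.cons p

lemma imageEquiv_coal {L : FlatLayout} (hL : L.Valid) : ImageEquiv (coal L) L :=
  (imageEquiv_coalAux fun p hp => hL p (List.mem_of_mem_filter hp)).trans
    (imageEquiv_squeeze L)

def IsColMajor (k : ℕ) : FlatLayout → Prop
  | [] => True
  | (s, d) :: L => d = k ∧ IsColMajor (s * k) L

namespace IsColMajor

lemma phi_eq {L : FlatLayout} {k : ℕ} (hL : IsColMajor k L) (x : ℕ) :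
    phi L x = k * (x % size L) := by
  induction L generalizing k x with
  | nil => simp [phi, Nat.mod_one]
  | cons p L ih =>
    obtain ⟨s, d⟩ := p
    obtain ⟨rfl, hL⟩ := hL
    rw [phi, ih hL, size_cons, Nat.mod_mul]
    ring

-- `cosize L = k * (size L - 1) + 1`, stated without truncated subtraction.
lemma cosize_add {L : FlatLayout} {k : ℕ} (hL : IsColMajor k L) (hv : L.Valid) :
    cosize L + k = k * size L + 1 := by
  induction L generalizing k with
  | nil => simp [cosize, add_comm]
  | cons p L ih =>
    obtain ⟨s, d⟩ := p
    obtain ⟨rfl, hL⟩ := hL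
    have ih := ih hL fun q hq => hv q (List.mem_cons_of_mem _ hq)
    obtain ⟨a, rfl⟩ : ∃ a, s = a + 1 := ⟨s - 1, by have := hv _ List.mem_cons_self; omega⟩
    rw [cosize_cons, size_cons, Nat.add_sub_cancel]
    linear_combination ih

lemma compact {L : FlatLayout} (hL : IsColMajor 1 L) (hv : L.Valid) : Compact L := by
  have hcosize : cosize L = size L := by have := hL.cosize_add hv; omega
  rw [Compact, hcosize]
  exact (Set.bijOn_id _).congr fun x hx => by
    rw [id, hL.phi_eq, one_mul, Nat.mod_eq_of_lt hx]

end IsColMajor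

def DvdChain (k : ℕ) : FlatLayout → ℕ → Prop
  | [], N => k ∣ N
  | (s, d) :: L, N => k ∣ d ∧ DvdChain (s * d) L N

lemma dvdChain_of_isChain {k N : ℕ} {M : FlatLayout}
    (hM : M.IsChain fun p q => p.1 * p.2 ∣ q.2) (hhead : ∀ p ∈ M.head?, k ∣ p.2)
    (hlast : ∀ p ∈ M.getLast?, p.1 * p.2 ∣ N) (hnil : M = [] → k ∣ N) : DvdChain k M N := by
  induction M generalizing k with
  | nil => exact hnil rfl
  | cons p M ih =>
    obtain ⟨s, d⟩ := p
    rw [List.isChain_cons] at hM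
    refine ⟨hhead _ rfl, ih hM.2 hM.1 (fun q hq => hlast q ?_) fun hM => hlast (s, d) ?_⟩
    · simp [List.getLast?_cons, Option.mem_def.mp hq]
    · simp [hM]

lemma dvdChain_of_nComplementable {A : FlatLayout} {N : ℕ} (hc : NComplementable A N) :
    DvdChain 1 (sortL (squeeze A)) N :=
  dvdChain_of_isChain hc.1 (fun _ _ => one_dvd _) hc.2 fun _ => one_dvd _

def compNModesFrom (k : ℕ) : FlatLayout → ℕ → FlatLayout
  | [], N => [(N / k, k)]
  | (s, d) :: L, N => (d / k, k) :: compNModesFrom (s * d) L N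

lemma compNModes_cons (s d : ℕ) (L : FlatLayout) (N : ℕ) :
    compNModes ((s, d) :: L) N = (d, 1) :: compNModesFrom (s * d) L N := by
  induction L generalizing s d with
  | nil => simp [compNModes, compModes, compNModesFrom]
  | cons q L ih =>
    obtain ⟨s', d'⟩ := q
    have ih := ih s' d'
    obtain ⟨m, hm⟩ : ∃ m, ((s', d') :: L).getLast? = some m := ⟨_, List.getLast?_cons⟩
    simp only [compNModes, List.getLast?_cons_cons, hm, compModes, List.zip_cons_cons,
      List.map_cons, List.cons_append, List.cons.injEq, true_and] at ih ⊢
    rw [compNModesFrom, ih]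

lemma compNModesFrom_one (M : FlatLayout) (N : ℕ) : compNModesFrom 1 M N = compNModes M N := by
  cases M with
  | nil => simp [compNModesFrom, compNModes]
  | cons p M => rw [compNModesFrom, Nat.div_one, compNModes_cons]

def interleave (k : ℕ) : FlatLayout → ℕ → FlatLayout
  | [], N => [(N / k, k)]
  | (s, d) :: L, N => (d / k, k) :: (s, d) :: interleave (s * d) L N

lemma perm_interleave (M : FlatLayout) (k N : ℕ) :
    (M ++ compNModesFrom k M N).Perm (interleave k M N) := by
  induction M generalizing k with
  | nil => rfl
  | cons p M ih =>
    obtain ⟨s, d⟩ := p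
    show ((s, d) :: (M ++ (d / k, k) :: compNModesFrom (s * d) M N)).Perm
      ((d / k, k) :: (s, d) :: interleave (s * d) M N)
    exact (List.perm_middle.cons _).trans ((List.Perm.swap _ _ _).trans (((ih _).cons _).cons _))

lemma isColMajor_interleave {M : FlatLayout} {k N : ℕ} (h : DvdChain k M N) :
    IsColMajor k (interleave k M N) := by
  induction M generalizing k with
  | nil => exact ⟨rfl, trivial⟩
  | cons p M ih =>
    obtain ⟨s, d⟩ := p
    refine ⟨rfl, ?_, ?_⟩
    · exact (Nat.div_mul_cancel h.1).symm
    · rw [Nat.div_mul_cancel h.1]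
      exact ih h.2

lemma size_interleave_mul {M : FlatLayout} {k N : ℕ} (h : DvdChain k M N) :
    size (interleave k M N) * k = N := by
  induction M generalizing k with
  | nil => simpa [interleave] using Nat.div_mul_cancel h
  | cons p M ih =>
    obtain ⟨s, d⟩ := p
    calc size (interleave k ((s, d) :: M) N) * k
        = size (interleave (s * d) M N) * (s * (d / k * k)) := by
          simp only [interleave, size_cons]; ring
      _ = N := by rw [Nat.div_mul_cancel h.1, ih h.2]

end FlatLayout

open FlatLayout in
theorem compN_isNComplement_general (A : FlatLayout) (N : ℕ) (hN : 0 < N)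
    (hc : NComplementable A N) :
    IsNComplement A (compN A N) N := by
  set M := sortL (squeeze A)
  have hchain : DvdChain 1 M N := dvdChain_of_nComplementable hc
  have hsize : size (interleave 1 M N) = N := by simpa using size_interleave_mul hchain
  have hperm : ImageEquiv (M ++ compNModes M N) (interleave 1 M N) :=
    imageEquiv_of_perm (compNModesFrom_one M N ▸ perm_interleave M 1 N)
  have hvalid : Valid (compNModes M N) := by
    have := hperm.size_eq
    rw [size_append, hsize] at this
    exact size_pos_iff.mp (Nat.pos_of_mul_pos_left (this ▸ hN))
  have hequiv : ImageEquiv (A ++ compN A N) (interleave 1 M N) :=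
    (((imageEquiv_squeeze A).symm.append (imageEquiv_coal hvalid)).trans
      (imageEquiv_of_perm ((List.mergeSort_perm _ _).symm.append_right _))).trans hperm
  refine ⟨hequiv.compact_iff.mpr ((isColMajor_interleave hchain).compact ?_), ?_⟩
  · exact size_pos_iff.mp (by rwa [hsize])
  · rw [← size_append, hequiv.size_eq, hsize]

open FlatLayout in
theorem compN_isNComplement (A : FlatLayout) (N : ℕ) (hA : A.Valid) (hN : 0 < N)
    (hc : NComplementable A N) :
    IsNComplement A (compN A N) N :=
  compN_isNComplement_general A N hN hc
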